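/- Let t be an integer. (1) If k ∣ q−1, then M_{k,t}(1,1) = (k : F_{q²}), M_{k,t}(i, k+2−i) = (k : F_{q²})·γ^{t((i−1)+(k+1−i)q)} for each 2 ≤ i ≤ k, and all other entries of M_{k,t} are 0. (2) If k ∣ q+1, then M_{k,t} is a diagonal matrix with M_{k,t}(i,i) = (k : F_{q²})·γ^{t(i−1)(1+q)} for each 1 ≤ i ≤ k. -/

import Mathlib

/-!
Since `γ` generates `F_{q²}^*`, `ζ = γ^((q²-1)/k)` is a primitive `k`-th root of unity and
`α_i = ζ^i`. Hence the `(r, s)` entry is `(γ^t)^n · Σ_i ζ^(i n)` with `n = r + s q`, and this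
geometric sum is `k` or `0` according as `k ∣ n` or not. As `q ≡ 1` resp. `q ≡ -1 (mod k)`,
`k ∣ r + s q` amounts to `k ∣ r + s` resp. `r = s`.
-/

open Finset

section RootsOfUnity

variable {K : Type*} [Field K]

theorem geom_sum_eq_zero_of_pow_eq_one {z : K} {k : ℕ} (hzk : z ^ k = 1) (hz : z ≠ 1) :
    ∑ i ∈ range k, z ^ i = 0 := by
  rw [geom_sum_eq hz, hzk, sub_self, zero_div]

theorem IsPrimitiveRoot.sum_mul_pow_succ_pow {ζ : K} {k : ℕ} (hζ : IsPrimitiveRoot ζ k)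
    (c : K) (n : ℕ) :
    ∑ i : Fin k, (c * ζ ^ ((i : ℕ) + 1)) ^ n = if k ∣ n then k * c ^ n else 0 := by
  have hsum : ∑ i : Fin k, (c * ζ ^ ((i : ℕ) + 1)) ^ n
      = c ^ n * ζ ^ n * ∑ i ∈ range k, (ζ ^ n) ^ i := by
    rw [Fin.sum_univ_eq_sum_range (fun i => (c * ζ ^ (i + 1)) ^ n), mul_sum]
    refine sum_congr rfl fun i _ => ?_
    ring
  split_ifs with hn
  · rw [hsum, (hζ.pow_eq_one_iff_dvd n).mpr hn]
    simp [mul_comm]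
  · have hζn : (ζ ^ n) ^ k = 1 := by rw [← pow_mul, mul_comm, pow_mul, hζ.pow_eq_one, one_pow]
    rw [hsum, geom_sum_eq_zero_of_pow_eq_one hζn (mt (hζ.pow_eq_one_iff_dvd n).mp hn), mul_zero]

theorem Units.sum_zpow_mul_pow_mul_succ_pow (γ : Kˣ) {d k : ℕ}
    (hγ : IsPrimitiveRoot ((γ : K) ^ d) k) (t : ℤ) (n : ℕ) :
    ∑ i : Fin k, (((γ ^ t : Kˣ) : K) * (γ : K) ^ (d * ((i : ℕ) + 1))) ^ n
      = if k ∣ n then k * ((γ ^ (t * n) : Kˣ) : K) else 0 := by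
  simp_rw [pow_mul]
  rw [hγ.sum_mul_pow_succ_pow, zpow_mul, zpow_natCast, Units.val_pow_eq_pow_val]

end RootsOfUnity

theorem Nat.dvd_add_mul_iff_dvd_add_of_dvd_sub_one {k q : ℕ} (hq : 0 < q) (hkq : k ∣ q - 1)
    (r s : ℕ) : k ∣ r + s * q ↔ k ∣ r + s := by
  obtain ⟨q, rfl⟩ := Nat.exists_eq_add_one_of_ne_zero hq.ne'
  rw [show r + s * (q + 1) = r + s + s * q by ring]
  exact Nat.dvd_add_left (dvd_mul_of_dvd_right (by simpa using hkq) s)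

theorem Nat.dvd_add_mul_iff_eq_of_dvd_add_one {k q : ℕ} (hkq : k ∣ q + 1) {r s : ℕ}
    (hr : r < k) (hs : s < k) : k ∣ r + s * q ↔ r = s := by
  have hq : (q : ZMod k) = -1 := eq_neg_of_add_eq_zero_left <| by
    exact_mod_cast (ZMod.natCast_eq_zero_iff _ _).mpr hkq
  rw [← ZMod.natCast_eq_zero_iff]
  push_cast
  rw [hq, mul_neg_one, ← sub_eq_add_neg, sub_eq_zero, ZMod.natCast_eq_natCast_iff',
    Nat.mod_eq_of_lt hr, Nat.mod_eq_of_lt hs]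

/-- explicit description of `M_{k,t}`.
(1) If `k ∣ q - 1`, then `M(1,1) = k`, the `(i, k+2-i)` entry (for `2 ≤ i ≤ k`, here written
with 0-based indices as the `(r, k-r)` entry for `1 ≤ r ≤ k-1`) equals
`k·γ^{t((i-1)+(k+1-i)q)}`, and all other entries (i.e. those with `(r+s) % k ≠ 0` in 0-based
indexing) vanish.
(2) If `k ∣ q + 1`, then `M` is diagonal with `M(i,i) = k·γ^{t(i-1)(1+q)}`. -/
theorem stmt10 {F : Type} [Field F] [Fintype F]
    (q : ℕ) (hcard : Fintype.card F = q ^ 2)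
    (γ : Fˣ) (hγ : ∀ x : Fˣ, x ∈ Subgroup.zpowers γ)
    (k : ℕ) (hk2 : 2 ≤ k) (hkdvd : k ∣ q ^ 2 - 1)
    (α : Fin k → F)
    (hα : ∀ i : Fin k, α i = (γ : F) ^ ((q ^ 2 - 1) / k * ((i : ℕ) + 1)))
    (t : ℤ) (M : Matrix (Fin k) (Fin k) F)
    (hM : ∀ r s : Fin k,
      M r s = ∑ i : Fin k, (((γ ^ t : Fˣ) : F) * α i) ^ ((r : ℕ) + (s : ℕ) * q)) :
    (k ∣ q - 1 →
        M ⟨0, by omega⟩ ⟨0, by omega⟩ = (k : F) ∧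
        (∀ r : Fin k, ∀ _hr : 1 ≤ (r : ℕ),
          M r ⟨k - (r : ℕ), by have := r.isLt; omega⟩ =
            (k : F) * ((γ ^ (t * (((r : ℕ) + (k - (r : ℕ)) * q : ℕ) : ℤ)) : Fˣ) : F)) ∧
        (∀ r s : Fin k, ((r : ℕ) + (s : ℕ)) % k ≠ 0 → M r s = 0)) ∧
      (k ∣ q + 1 →
        (∀ r : Fin k,
          M r r = (k : F) * ((γ ^ (t * ((r : ℕ) : ℤ) * ((1 + q : ℕ) : ℤ)) : Fˣ) : F)) ∧
        (∀ r s : Fin k, r ≠ s → M r s = 0)) := by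
  have hq2 : 1 < q ^ 2 := hcard ▸ Fintype.one_lt_card
  have hq0 : 0 < q := Nat.pos_of_ne_zero (by rintro rfl; simp at hq2)
  have hγ : IsPrimitiveRoot (γ : F) (q ^ 2 - 1) := by
    rw [IsPrimitiveRoot.coe_units_iff, IsPrimitiveRoot.iff_orderOf,
      orderOf_eq_card_of_forall_mem_zpowers hγ, Nat.card_units, Nat.card_eq_fintype_card, hcard]
  have hζ : IsPrimitiveRoot ((γ : F) ^ ((q ^ 2 - 1) / k)) k :=
    hγ.pow (by omega) (Nat.div_mul_cancel hkdvd).symm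
  have hentry (r s : Fin k) : M r s = if k ∣ (r : ℕ) + (s : ℕ) * q
      then k * ((γ ^ (t * (((r : ℕ) + (s : ℕ) * q : ℕ) : ℤ)) : Fˣ) : F) else 0 := by
    simp_rw [hM, hα]
    exact_mod_cast Units.sum_zpow_mul_pow_mul_succ_pow γ hζ t _
  constructor
  · intro hk
    have hdvd := Nat.dvd_add_mul_iff_dvd_add_of_dvd_sub_one hq0 hk
    refine ⟨by simp [hentry], fun r _ => ?_, fun r s hrs => ?_⟩
    · rw [hentry, if_pos ((hdvd _ _).mpr (by rw [Nat.add_sub_cancel' r.isLt.le]))]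
    · rw [hentry, if_neg (by rwa [hdvd, Nat.dvd_iff_mod_eq_zero])]
  · intro hk
    refine ⟨fun r => ?_, fun r s hrs => ?_⟩
    · rw [hentry, if_pos ((Nat.dvd_add_mul_iff_eq_of_dvd_add_one hk r.isLt r.isLt).mpr rfl)]
      congr 3
      push_cast
      ring
    · have hdvd := Nat.dvd_add_mul_iff_eq_of_dvd_add_one hk r.isLt s.isLt
      rw [hentry, if_neg (mt hdvd.mp (Fin.val_ne_of_ne hrs))]
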